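/- Let n ≥ 1 and T > 0. Let u : ℝⁿ × [0,T] → ℝ be a smooth positive solution of the heat equation ∂ₜu = Δu on ℝⁿ × [0,T]. Then the function w(x,t) := ‖∇u(x,t)‖² / u(x,t) satisfies the identity Δw − ∂ₜw = (2/u) · Σ_{i,j} (∂ᵢ∂ⱼu − (∂ᵢu)(∂ⱼu)/u)², and in particular Δw − ∂ₜw ≥ 0, i.e. w is a subsolution of the heat equation. -/

import Mathlib

/-! Put `f = u(·, t)`. The product and chain rules together with the flat Bochner identity
`Δ|∇f|² = 2|∇²f|² + 2⟨∇f, ∇Δf⟩` give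
`Δ(|∇f|²/f) = (2/f)|∇²f − ∇f ⊗ ∇f / f|² + 2⟨∇f, ∇Δf⟩/f − |∇f|² Δf/f²`.
Since `∂ₜ` commutes with the spatial derivatives (the mixed second derivative of `u` is symmetric,
up to the boundary of `[0, T]`), `∂ₜ(|∇u|²/u) = 2⟨∇u, ∇∂ₜu⟩/u − |∇u|² ∂ₜu/u²`, and with `∂ₜu = Δu`
the last two terms cancel. -/

open Set

/-- The Laplacian of `f : ℝⁿ → ℝ` (flat Euclidean metric): the trace of the
second derivative, i.e. the sum of the second partial derivatives. -/
noncomputable def lap {n : ℕ} (f : EuclideanSpace ℝ (Fin n) → ℝ)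
    (x : EuclideanSpace ℝ (Fin n)) : ℝ :=
  ∑ i : Fin n,
    fderiv ℝ (fun y => fderiv ℝ f y (EuclideanSpace.single i 1)) x
      (EuclideanSpace.single i 1)

noncomputable def partialDeriv {n : ℕ} (i : Fin n) (f : EuclideanSpace ℝ (Fin n) → ℝ)
    (x : EuclideanSpace ℝ (Fin n)) : ℝ :=
  fderiv ℝ f x (EuclideanSpace.single i 1)

section Calculus

variable {n : ℕ} {f g h : EuclideanSpace ℝ (Fin n) → ℝ} {x : EuclideanSpace ℝ (Fin n)}
  {i j : Fin n}

theorem lap_eq_sum_partialDeriv : lap f x = ∑ i, partialDeriv i (partialDeriv i f) x := rfl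

theorem ContDiff.partialDeriv {k m : WithTop ℕ∞} (hf : ContDiff ℝ k f) (hmk : m + 1 ≤ k) :
    ContDiff ℝ m (partialDeriv i f) :=
  (hf.fderiv_right hmk).clm_apply contDiff_const

theorem partialDeriv_add (hg : DifferentiableAt ℝ g x) (hh : DifferentiableAt ℝ h x) :
    partialDeriv i (fun y => g y + h y) x = partialDeriv i g x + partialDeriv i h x := by
  simp [partialDeriv, fderiv_fun_add hg hh]

theorem partialDeriv_mul (hg : DifferentiableAt ℝ g x) (hh : DifferentiableAt ℝ h x) :
    partialDeriv i (fun y => g y * h y) x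
      = partialDeriv i g x * h x + g x * partialDeriv i h x := by
  simp [partialDeriv, fderiv_fun_mul hg hh]; ring

theorem partialDeriv_sum {ι : Type*} {s : Finset ι} {F : ι → EuclideanSpace ℝ (Fin n) → ℝ}
    (hF : ∀ k ∈ s, DifferentiableAt ℝ (F k) x) :
    partialDeriv i (fun y => ∑ k ∈ s, F k y) x = ∑ k ∈ s, partialDeriv i (F k) x := by
  simp [partialDeriv, fderiv_fun_sum hF]

theorem partialDeriv_comp_real {φ : ℝ → ℝ} {φ' : ℝ} (hφ : HasDerivAt φ φ' (g x))
    (hg : DifferentiableAt ℝ g x) :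
    partialDeriv i (fun y => φ (g y)) x = φ' * partialDeriv i g x := by
  change fderiv ℝ (φ ∘ g) x _ = _
  rw [(hφ.comp_hasFDerivAt x hg.hasFDerivAt).fderiv]
  rfl

theorem partialDeriv_inv (hg : DifferentiableAt ℝ g x) (hgx : g x ≠ 0) :
    partialDeriv i (fun y => (g y)⁻¹) x = -partialDeriv i g x / g x ^ 2 := by
  rw [partialDeriv_comp_real (hasDerivAt_inv hgx) hg]; ring

theorem partialDeriv_sq (hg : DifferentiableAt ℝ g x) :
    partialDeriv i (fun y => g y ^ 2) x = 2 * g x * partialDeriv i g x := by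
  rw [partialDeriv_comp_real (hasDerivAt_pow 2 (g x)) hg]; norm_num

theorem partialDeriv_partialDeriv_eq_fderiv_fderiv (hf : DifferentiableAt ℝ (fderiv ℝ f) x) :
    partialDeriv i (partialDeriv j f) x
      = fderiv ℝ (fderiv ℝ f) x (EuclideanSpace.single i 1) (EuclideanSpace.single j 1) := by
  change fderiv ℝ (fun y => fderiv ℝ f y _) x _ = _
  simp [(hf.hasFDerivAt.clm_apply (hasFDerivAt_const _ x)).fderiv]

theorem partialDeriv_comm (hf : ContDiff ℝ 2 f) :
    partialDeriv i (partialDeriv j f) x = partialDeriv j (partialDeriv i f) x := by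
  have hd : DifferentiableAt ℝ (fderiv ℝ f) x :=
    (hf.fderiv_right (m := 1) le_rfl).differentiable one_ne_zero x
  rw [partialDeriv_partialDeriv_eq_fderiv_fderiv hd, partialDeriv_partialDeriv_eq_fderiv_fderiv hd]
  exact hf.contDiffAt.isSymmSndFDerivAt (by simp) _ _

theorem partialDeriv_partialDeriv_mul (hg : ContDiff ℝ 2 g) (hh : ContDiff ℝ 2 h) :
    partialDeriv i (partialDeriv i (fun y => g y * h y)) x
      = partialDeriv i (partialDeriv i g) x * h x + 2 * partialDeriv i g x * partialDeriv i h x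
        + g x * partialDeriv i (partialDeriv i h) x := by
  have hg1 := hg.differentiable two_ne_zero
  have hh1 := hh.differentiable two_ne_zero
  have hg2 := (hg.partialDeriv (i := i) (m := 1) (by norm_num)).differentiable one_ne_zero
  have hh2 := (hh.partialDeriv (i := i) (m := 1) (by norm_num)).differentiable one_ne_zero
  have hfirst : partialDeriv i (fun y => g y * h y)
      = fun y => partialDeriv i g y * h y + g y * partialDeriv i h y :=
    funext fun y => partialDeriv_mul (hg1 y) (hh1 y)
  rw [hfirst, partialDeriv_add (g := fun y => partialDeriv i g y * h y)
      (h := fun y => g y * partialDeriv i h y) ((hg2 x).mul (hh1 x)) ((hg1 x).mul (hh2 x)),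
    partialDeriv_mul (hg2 x) (hh1 x), partialDeriv_mul (hg1 x) (hh2 x)]
  ring

theorem partialDeriv_partialDeriv_comp_real {φ φ' : ℝ → ℝ} {φ'' : ℝ}
    (hφ : ∀ y, HasDerivAt φ (φ' (h y)) (h y)) (hφ' : HasDerivAt φ' φ'' (h x))
    (hh : ContDiff ℝ 2 h) :
    partialDeriv i (partialDeriv i (fun y => φ (h y))) x
      = φ'' * partialDeriv i h x ^ 2 + φ' (h x) * partialDeriv i (partialDeriv i h) x := by
  have hh1 := hh.differentiable two_ne_zero
  have hh2 := (hh.partialDeriv (i := i) (m := 1) (by norm_num)).differentiable one_ne_zero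
  have hfirst : partialDeriv i (fun y => φ (h y)) = fun y => φ' (h y) * partialDeriv i h y :=
    funext fun y => partialDeriv_comp_real (hφ y) (hh1 y)
  rw [hfirst, partialDeriv_mul (g := fun y => φ' (h y)) (hφ'.differentiableAt.comp x (hh1 x))
    (hh2 x), partialDeriv_comp_real hφ' (hh1 x)]
  ring

theorem lap_mul (hg : ContDiff ℝ 2 g) (hh : ContDiff ℝ 2 h) :
    lap (fun y => g y * h y) x
      = lap g x * h x + 2 * ∑ i, partialDeriv i g x * partialDeriv i h x + g x * lap h x := by
  simp only [lap_eq_sum_partialDeriv, partialDeriv_partialDeriv_mul hg hh, Finset.sum_add_distrib,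
    Finset.sum_mul, Finset.mul_sum, mul_assoc]

theorem lap_comp_real {φ φ' : ℝ → ℝ} {φ'' : ℝ}
    (hφ : ∀ y, HasDerivAt φ (φ' (h y)) (h y)) (hφ' : HasDerivAt φ' φ'' (h x))
    (hh : ContDiff ℝ 2 h) :
    lap (fun y => φ (h y)) x = φ'' * ∑ i, partialDeriv i h x ^ 2 + φ' (h x) * lap h x := by
  simp only [lap_eq_sum_partialDeriv, partialDeriv_partialDeriv_comp_real hφ hφ' hh,
    Finset.sum_add_distrib, Finset.mul_sum]

theorem lap_sq (hh : ContDiff ℝ 2 h) :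
    lap (fun y => h y ^ 2) x = 2 * ∑ i, partialDeriv i h x ^ 2 + 2 * h x * lap h x :=
  lap_comp_real (φ' := fun r => 2 * r) (fun y => by simpa using hasDerivAt_pow 2 (h y))
    ((hasDerivAt_id (h x)).const_mul 2 |>.congr_deriv (mul_one 2)) hh

theorem lap_inv (hh : ContDiff ℝ 2 h) (hh0 : ∀ y, h y ≠ 0) :
    lap (fun y => (h y)⁻¹) x
      = 2 * (∑ i, partialDeriv i h x ^ 2) / h x ^ 3 - lap h x / h x ^ 2 := by
  have hφ' : HasDerivAt (fun r => -(r ^ 2)⁻¹) (2 / h x ^ 3) (h x) := by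
    refine ((hasDerivAt_pow 2 (h x)).fun_inv (pow_ne_zero 2 (hh0 x))).fun_neg.congr_deriv ?_
    field_simp [hh0 x]
    ring
  rw [lap_comp_real (fun y => hasDerivAt_inv (hh0 y)) hφ' hh]
  ring

theorem lap_div (hg : ContDiff ℝ 2 g) (hh : ContDiff ℝ 2 h) (hh0 : ∀ y, h y ≠ 0) :
    lap (fun y => g y / h y) x
      = lap g x / h x - 2 * (∑ i, partialDeriv i g x * partialDeriv i h x) / h x ^ 2
        - g x * lap h x / h x ^ 2 + 2 * g x * (∑ i, partialDeriv i h x ^ 2) / h x ^ 3 := by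
  have hinv : ContDiff ℝ 2 (fun y => (h y)⁻¹) := hh.inv hh0
  simp only [div_eq_mul_inv (g _) (h _)]
  rw [lap_mul hg hinv, lap_inv hh hh0]
  have hcross : ∑ i, partialDeriv i g x * partialDeriv i (fun y => (h y)⁻¹) x
      = -(∑ i, partialDeriv i g x * partialDeriv i h x) / h x ^ 2 := by
    rw [neg_div, Finset.sum_div, ← Finset.sum_neg_distrib]
    refine Finset.sum_congr rfl fun i _ => ?_
    rw [partialDeriv_inv ((hh.differentiable two_ne_zero) x) (hh0 x)]
    ring
  rw [hcross]
  ring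

theorem lap_sum {ι : Type*} {s : Finset ι} {F : ι → EuclideanSpace ℝ (Fin n) → ℝ}
    (hF : ∀ k ∈ s, ContDiff ℝ 2 (F k)) :
    lap (fun y => ∑ k ∈ s, F k y) x = ∑ k ∈ s, lap (F k) x := by
  have hfirst : ∀ i, partialDeriv i (fun y => ∑ k ∈ s, F k y)
      = fun y => ∑ k ∈ s, partialDeriv i (F k) y := fun i =>
    funext fun y => partialDeriv_sum fun k hk => (hF k hk).differentiable two_ne_zero y
  simp only [lap_eq_sum_partialDeriv, hfirst]
  rw [Finset.sum_comm]
  refine Finset.sum_congr rfl fun i _ => partialDeriv_sum fun k hk => ?_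
  exact ((hF k hk).partialDeriv (m := 1) (by norm_num)).differentiable one_ne_zero x

theorem lap_partialDeriv (hf : ContDiff ℝ 3 f) :
    lap (partialDeriv i f) x = partialDeriv i (lap f) x := by
  have hf2 : ContDiff ℝ 2 f := hf.of_le (by norm_num)
  have hdf : ∀ j, ContDiff ℝ 2 (partialDeriv j f) := fun j => hf.partialDeriv (by norm_num)
  have hlap : lap f = fun y => ∑ j, partialDeriv j (partialDeriv j f) y := rfl
  rw [lap_eq_sum_partialDeriv, hlap, partialDeriv_sum fun j _ =>
    (((hdf j).partialDeriv (m := 1) (by norm_num)).differentiable one_ne_zero x)]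
  refine Finset.sum_congr rfl fun j _ => ?_
  have hswap : partialDeriv j (partialDeriv i f) = partialDeriv i (partialDeriv j f) :=
    funext fun y => partialDeriv_comm hf2
  rw [hswap, partialDeriv_comm (hdf j)]

theorem sum_sum_sub_mul_div_sq {ι : Type*} (s : Finset ι) (c : ℝ) (p : ι → ℝ) (q : ι → ι → ℝ) :
    ∑ i ∈ s, ∑ j ∈ s, (q i j - p i * p j / c) ^ 2
      = ∑ i ∈ s, ∑ j ∈ s, q i j ^ 2 - 2 * (∑ i ∈ s, p i * ∑ j ∈ s, p j * q i j) / c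
        + (∑ i ∈ s, p i ^ 2) ^ 2 / c ^ 2 := by
  rw [sq (∑ i ∈ s, p i ^ 2), Finset.sum_mul_sum]
  simp only [Finset.mul_sum, Finset.sum_div, ← Finset.sum_sub_distrib, ← Finset.sum_add_distrib]
  exact Finset.sum_congr rfl fun i _ => Finset.sum_congr rfl fun j _ => by ring

theorem lap_sum_sq_partialDeriv_div (hf : ContDiff ℝ 3 f) (hf0 : ∀ y, f y ≠ 0) :
    lap (fun y => (∑ k, partialDeriv k f y ^ 2) / f y) x
      = 2 / f x * ∑ i, ∑ j, (partialDeriv i (partialDeriv j f) x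
            - partialDeriv i f x * partialDeriv j f x / f x) ^ 2
        + 2 * (∑ k, partialDeriv k f x * partialDeriv k (lap f) x) / f x
        - (∑ k, partialDeriv k f x ^ 2) * lap f x / f x ^ 2 := by
  have hf2 : ContDiff ℝ 2 f := hf.of_le (by norm_num)
  have hdf : ∀ k, ContDiff ℝ 2 (partialDeriv k f) := fun k => hf.partialDeriv (by norm_num)
  have hv : ContDiff ℝ 2 (fun y => ∑ k, partialDeriv k f y ^ 2) :=
    ContDiff.sum fun k _ => (hdf k).pow 2
  have hlapv : lap (fun y => ∑ k, partialDeriv k f y ^ 2) x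
      = 2 * ∑ i, ∑ j, partialDeriv i (partialDeriv j f) x ^ 2
        + 2 * ∑ k, partialDeriv k f x * partialDeriv k (lap f) x := by
    rw [lap_sum fun k _ => (hdf k).pow 2]
    simp only [lap_sq (hdf _), lap_partialDeriv hf, Finset.sum_add_distrib, ← Finset.mul_sum,
      mul_assoc]
    rw [Finset.sum_comm]
  have hgradv : ∀ i, partialDeriv i (fun y => ∑ k, partialDeriv k f y ^ 2) x
      = 2 * ∑ k, partialDeriv k f x * partialDeriv i (partialDeriv k f) x := by
    intro i
    rw [partialDeriv_sum fun k _ => ((hdf k).pow 2).differentiable two_ne_zero x, Finset.mul_sum]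
    exact Finset.sum_congr rfl fun k _ => by
      rw [partialDeriv_sq ((hdf k).differentiable two_ne_zero x)]; ring
  rw [lap_div hv hf2 hf0, hlapv, sum_sum_sub_mul_div_sq]
  have hcross : ∑ i, partialDeriv i (fun y => ∑ k, partialDeriv k f y ^ 2) x * partialDeriv i f x
      = 2 * ∑ i, partialDeriv i f x
          * ∑ k, partialDeriv k f x * partialDeriv i (partialDeriv k f) x := by
    rw [Finset.mul_sum]
    exact Finset.sum_congr rfl fun i _ => by rw [hgradv]; ring
  rw [hcross]
  field_simp [hf0 x]
  ring

end Calculus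

section Slices

variable {E F : Type*} [NormedAddCommGroup E] [NormedSpace ℝ E] [NormedAddCommGroup F]
  [NormedSpace ℝ F] {Φ : E × ℝ → F} {L : E × ℝ →L[ℝ] F} {I : Set ℝ} {x : E} {t : ℝ}

theorem HasFDerivWithinAt.comp_prodMk_left (hΦ : HasFDerivWithinAt Φ L (univ ×ˢ I) (x, t))
    (ht : t ∈ I) : HasFDerivAt (fun z => Φ (z, t)) (L.comp (ContinuousLinearMap.inl ℝ E ℝ)) x :=
  hasFDerivWithinAt_univ.mp <| hΦ.comp x (hasFDerivAt_prodMk_left x t).hasFDerivWithinAt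
    fun z _ => show (z, t) ∈ univ ×ˢ I from ⟨mem_univ z, ht⟩

theorem HasFDerivWithinAt.comp_prodMk_right (hΦ : HasFDerivWithinAt Φ L (univ ×ˢ I) (x, t)) :
    HasDerivWithinAt (fun s => Φ (x, s)) (L (0, 1)) I t :=
  hΦ.comp_hasDerivWithinAt t ((hasDerivWithinAt_const t I x).prodMk (hasDerivWithinAt_id t I))
    fun _ hs => ⟨mem_univ x, hs⟩

theorem hasDerivWithinAt_fderiv_slice {U : E → ℝ → ℝ} {a b : ℝ} (hab : a < b)
    (hU : ContDiffOn ℝ 2 (fun p : E × ℝ => U p.1 p.2) (univ ×ˢ Icc a b)) (x : E) {t : ℝ}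
    (ht : t ∈ Icc a b) (v : E) :
    HasDerivWithinAt (fun s => fderiv ℝ (fun z => U z s) x v)
      (fderiv ℝ (fun z => derivWithin (U z) (Icc a b) t) x v) (Icc a b) t := by
  set S : Set (E × ℝ) := univ ×ˢ Icc a b
  have hS : UniqueDiffOn ℝ S := uniqueDiffOn_univ.prod (uniqueDiffOn_Icc hab)
  have hmem : ∀ z, ∀ s ∈ Icc a b, (z, s) ∈ S := fun z s hs => ⟨mem_univ z, hs⟩
  set G := fderivWithin ℝ (fun p : E × ℝ => U p.1 p.2) S
  set H := fderivWithin ℝ G S (x, t)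
  have hUG : ∀ p ∈ S, HasFDerivWithinAt (fun p : E × ℝ => U p.1 p.2) (G p) S p := fun p hp =>
    ((hU p hp).differentiableWithinAt two_ne_zero).hasFDerivWithinAt
  have hGH : HasFDerivWithinAt G H S (x, t) :=
    (((hU.fderivWithin hS (m := 1) (by norm_num)) (x, t) (hmem x t ht)).differentiableWithinAt
      one_ne_zero).hasFDerivWithinAt
  have hspace : ∀ s ∈ Icc a b, fderiv ℝ (fun z => U z s) x v = G (x, s) (v, 0) := fun s hs => by
    rw [((hUG _ (hmem x s hs)).comp_prodMk_left hs).fderiv]; rfl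
  have htime : ∀ z, derivWithin (U z) (Icc a b) t = G (z, t) (0, 1) := fun z =>
    ((hUG _ (hmem z t ht)).comp_prodMk_right).derivWithin (uniqueDiffOn_Icc hab t ht)
  have hclosure : (x, t) ∈ closure (interior S) := by
    rw [interior_prod_eq, closure_prod_eq, interior_univ, closure_univ, interior_Icc,
      closure_Ioo hab.ne]
    exact hmem x t ht
  have hsymm : H (v, 0) (0, 1) = H (0, 1) (v, 0) :=
    (hU (x, t) (hmem x t ht)).isSymmSndFDerivWithinAt (by simp) hS hclosure (hmem x t ht) _ _
  have hGt : HasDerivWithinAt (fun s => G (x, s) (v, 0)) (H (0, 1) (v, 0)) (Icc a b) t := by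
    simpa using hGH.comp_prodMk_right.clm_apply (hasDerivWithinAt_const t _ ((v, 0) : E × ℝ))
  have hGx : fderiv ℝ (fun z => G (z, t) (0, 1)) x v = H (v, 0) (0, 1) := by
    rw [((hGH.comp_prodMk_left ht).clm_apply (hasFDerivAt_const ((0, 1) : E × ℝ) x)).fderiv]
    simp
  have hfun : (fun z => derivWithin (U z) (Icc a b) t) = fun z => G (z, t) (0, 1) := funext htime
  rw [hfun, hGx, hsymm]
  exact hGt.congr (fun s hs => hspace s hs) (hspace t ht)

end Slices

theorem norm_gradient_sq {n : ℕ} (f : EuclideanSpace ℝ (Fin n) → ℝ) (x : EuclideanSpace ℝ (Fin n)) :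
    ‖gradient f x‖ ^ 2 = ∑ i, partialDeriv i f x ^ 2 := by
  rw [EuclideanSpace.real_norm_sq_eq]
  refine Finset.sum_congr rfl fun i _ => ?_
  rw [partialDeriv, ← inner_gradient_left, EuclideanSpace.inner_single_right]
  simp

theorem hasDerivWithinAt_sum_sq_partialDeriv_div {n : ℕ} {u : EuclideanSpace ℝ (Fin n) → ℝ → ℝ}
    {a b : ℝ} (hab : a < b)
    (hu : ContDiffOn ℝ 2 (fun p : EuclideanSpace ℝ (Fin n) × ℝ => u p.1 p.2) (univ ×ˢ Icc a b))
    (x : EuclideanSpace ℝ (Fin n)) {t : ℝ} (ht : t ∈ Icc a b) (hux : u x t ≠ 0) :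
    HasDerivWithinAt (fun s => (∑ k, partialDeriv k (fun z => u z s) x ^ 2) / u x s)
      (2 * (∑ k, partialDeriv k (fun z => u z t) x
          * partialDeriv k (fun z => derivWithin (u z) (Icc a b) t) x) / u x t
        - (∑ k, partialDeriv k (fun z => u z t) x ^ 2) * derivWithin (u x) (Icc a b) t / u x t ^ 2)
      (Icc a b) t := by
  have hnum : HasDerivWithinAt (fun s => ∑ k, partialDeriv k (fun z => u z s) x ^ 2)
      (∑ k, 2 * partialDeriv k (fun z => u z t) x
        * partialDeriv k (fun z => derivWithin (u z) (Icc a b) t) x) (Icc a b) t :=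
    HasDerivWithinAt.fun_sum fun k _ => by
      simpa [partialDeriv] using (hasDerivWithinAt_fderiv_slice hab hu x ht _).fun_pow 2
  have hden : HasDerivWithinAt (u x) (derivWithin (u x) (Icc a b) t) (Icc a b) t :=
    (((hu (x, t) ⟨mem_univ x, ht⟩).differentiableWithinAt two_ne_zero).hasFDerivWithinAt
      |>.comp_prodMk_right).differentiableWithinAt.hasDerivWithinAt
  refine (hnum.fun_div hden hux).congr_deriv ?_
  simp only [mul_assoc, ← Finset.mul_sum]
  field_simp

theorem heat_gradsq_over_u_subsolution_general
    (n : ℕ) (T : ℝ) (hT : 0 < T)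
    (u : EuclideanSpace ℝ (Fin n) → ℝ → ℝ)
    (hsmooth : ContDiffOn ℝ (⊤ : ℕ∞)
      (fun p : EuclideanSpace ℝ (Fin n) × ℝ => u p.1 p.2) (univ ×ˢ Icc 0 T))
    (hpos : ∀ x, ∀ t ∈ Icc (0 : ℝ) T, 0 < u x t)
    (hheat : ∀ x, ∀ t ∈ Icc (0 : ℝ) T,
      derivWithin (fun s => u x s) (Icc 0 T) t = lap (fun y => u y t) x) :
    ∀ x, ∀ t ∈ Icc (0 : ℝ) T,
      (lap (fun y => ‖gradient (fun z => u z t) y‖ ^ 2 / u y t) x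
          - derivWithin (fun s => ‖gradient (fun z => u z s) x‖ ^ 2 / u x s)
              (Icc 0 T) t
        = (2 / u x t) *
            ∑ i : Fin n, ∑ j : Fin n,
              (fderiv ℝ
                  (fun y => fderiv ℝ (fun z => u z t) y (EuclideanSpace.single j 1))
                  x (EuclideanSpace.single i 1)
                - fderiv ℝ (fun z => u z t) x (EuclideanSpace.single i 1)
                    * fderiv ℝ (fun z => u z t) x (EuclideanSpace.single j 1)
                    / u x t) ^ 2)
      ∧ 0 ≤ lap (fun y => ‖gradient (fun z => u z t) y‖ ^ 2 / u y t) x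
          - derivWithin (fun s => ‖gradient (fun z => u z s) x‖ ^ 2 / u x s)
              (Icc 0 T) t := by
  intro x t ht
  have hsmooth3 := hsmooth.of_le (m := 3) (WithTop.coe_le_coe.2 le_top)
  have hslice : ContDiff ℝ 3 (fun z => u z t) :=
    contDiffOn_univ.mp <| hsmooth3.comp (contDiff_id.prodMk contDiff_const).contDiffOn
      fun z _ => ⟨mem_univ z, ht⟩
  have hdt := (hasDerivWithinAt_sum_sq_partialDeriv_div hT (hsmooth3.of_le (by norm_num)) x ht
    (hpos x t ht).ne').derivWithin (uniqueDiffOn_Icc hT t ht)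
  have hheat_fun : (fun y => derivWithin (u y) (Icc 0 T) t) = lap (fun y => u y t) :=
    funext fun y => hheat y t ht
  have hidentity : lap (fun y => ‖gradient (fun z => u z t) y‖ ^ 2 / u y t) x
      - derivWithin (fun s => ‖gradient (fun z => u z s) x‖ ^ 2 / u x s) (Icc 0 T) t
      = 2 / u x t * ∑ i, ∑ j, (partialDeriv i (partialDeriv j (fun z => u z t)) x
          - partialDeriv i (fun z => u z t) x * partialDeriv j (fun z => u z t) x / u x t) ^ 2 := by
    simp only [norm_gradient_sq]
    rw [lap_sum_sq_partialDeriv_div hslice fun y => (hpos y t ht).ne', hdt, hheat_fun,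
      hheat x t ht]
    ring
  refine ⟨hidentity, hidentity ▸ mul_nonneg (div_nonneg zero_le_two (hpos x t ht).le) ?_⟩
  exact Finset.sum_nonneg fun i _ => Finset.sum_nonneg fun j _ => sq_nonneg _

/-- For a smooth positive solution `u` of the heat equation on ℝⁿ × [0,T], the
function `w = ‖∇u‖²/u` satisfies
`Δw − ∂ₜw = (2/u)·Σ_{i,j} (∂ᵢ∂ⱼu − ∂ᵢu ∂ⱼu/u)² ≥ 0`, i.e. `w` is a
subsolution of the heat equation. -/
theorem heat_gradsq_over_u_subsolution
    (n : ℕ) (hn : 1 ≤ n) (T : ℝ) (hT : 0 < T)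
    (u : EuclideanSpace ℝ (Fin n) → ℝ → ℝ)
    (hsmooth : ContDiffOn ℝ (⊤ : ℕ∞)
      (fun p : EuclideanSpace ℝ (Fin n) × ℝ => u p.1 p.2) (univ ×ˢ Icc 0 T))
    (hpos : ∀ x, ∀ t ∈ Icc (0 : ℝ) T, 0 < u x t)
    (hheat : ∀ x, ∀ t ∈ Icc (0 : ℝ) T,
      derivWithin (fun s => u x s) (Icc 0 T) t = lap (fun y => u y t) x) :
    ∀ x, ∀ t ∈ Icc (0 : ℝ) T,
      (lap (fun y => ‖gradient (fun z => u z t) y‖ ^ 2 / u y t) x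
          - derivWithin (fun s => ‖gradient (fun z => u z s) x‖ ^ 2 / u x s)
              (Icc 0 T) t
        = (2 / u x t) *
            ∑ i : Fin n, ∑ j : Fin n,
              (fderiv ℝ
                  (fun y => fderiv ℝ (fun z => u z t) y (EuclideanSpace.single j 1))
                  x (EuclideanSpace.single i 1)
                - fderiv ℝ (fun z => u z t) x (EuclideanSpace.single i 1)
                    * fderiv ℝ (fun z => u z t) x (EuclideanSpace.single j 1)
                    / u x t) ^ 2)
      ∧ 0 ≤ lap (fun y => ‖gradient (fun z => u z t) y‖ ^ 2 / u y t) x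
          - derivWithin (fun s => ‖gradient (fun z => u z s) x‖ ^ 2 / u x s)
              (Icc 0 T) t :=
  heat_gradsq_over_u_subsolution_general n T hT u hsmooth hpos hheat
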